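/- arXiv:1906.11012 — 7 statements merged into one kernel-verified Lean document; each statement's English description precedes it below -/
import Mathlib

section
/- Let ξ(λ) be the unique positive solution of ξ = (1+λ)(1-e^{-ξ}) for λ > 0. Then λ ≤ ξ(λ) ≤ min(2λ, 1+λ) for all λ > 0. -/
/-!
Write `f t = (1 - e^{-t}) / t`, so that `ξ = ξ(λ)` is characterised by `f ξ = 1 / (1 + λ)`.
Since `0 < 1 - e^{-ξ} < 1`, we get `ξ < 1 + λ`, and `e^ξ ≥ 1 + ξ` turns the equation into
`ξ (λ - ξ) ≤ 0`, i.e. `λ ≤ ξ`. By strict convexity of `exp`, `f` is strictly decreasing on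
`(0, ∞)`, so `ξ ≤ 2λ` is equivalent to `f (2λ) ≤ 1 / (1 + λ)`, that is to
`1 - λ ≤ (1 + λ) e^{-2λ}`. For `λ < 1` this says `2λ ≤ log ((1 + λ) / (1 - λ))`, and `2λ` is
the first term of the series `∑ 2 λ^(2k+1) / (2k+1)` of the right-hand side.
-/

open Real Set

lemma two_mul_le_log_one_add_sub_log_one_sub {x : ℝ} (hx₀ : 0 ≤ x) (hx₁ : x < 1) :
    2 * x ≤ log (1 + x) - log (1 - x) := by
  have hsum := hasSum_log_sub_log_of_abs_lt_one (by rwa [abs_of_nonneg hx₀])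
  simpa using le_hasSum hsum 0 fun k _ => by positivity

lemma one_sub_le_one_add_mul_exp_neg_two_mul {x : ℝ} (hx : 0 ≤ x) :
    1 - x ≤ (1 + x) * exp (-(2 * x)) := by
  rcases lt_or_ge x 1 with hx₁ | hx₁
  · have h := exp_le_exp.2 (two_mul_le_log_one_add_sub_log_one_sub hx hx₁)
    rw [exp_sub, exp_log (by linarith), exp_log (by linarith), le_div_iff₀ (by linarith)] at h
    rw [exp_neg, ← div_eq_mul_inv, le_div_iff₀ (exp_pos _)]
    linarith
  · nlinarith [exp_pos (-(2 * x))]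

lemma strictAntiOn_one_sub_exp_neg_div : StrictAntiOn (fun t => (1 - exp (-t)) / t) (Ioi 0) := by
  intro y (hy : 0 < y) x (hx : 0 < x) hyx
  have hchord := strictConvexOn_exp.2 (mem_univ 0) (mem_univ (-x)) (by linarith)
    (div_pos (sub_pos.2 hyx) hx) (div_pos hy hx) (by field_simp; ring)
  have hcomb : ((x - y) / x) • (0 : ℝ) + (y / x) • (-x) = -y := by
    simp only [smul_eq_mul]; field_simp; ring
  rw [hcomb, exp_zero, smul_eq_mul, smul_eq_mul, mul_one] at hchord
  have key : x * exp (-y) < x - y + y * exp (-x) := calc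
    x * exp (-y) < x * ((x - y) / x + y / x * exp (-x)) := by gcongr
    _ = x - y + y * exp (-x) := by field_simp
  rw [div_lt_div_iff₀ hx hy]
  linarith

section FixedPoint

variable {lam x : ℝ}

lemma lt_one_add_of_eq_mul_one_sub_exp_neg (hx : 0 < x) (h : x = (1 + lam) * (1 - exp (-x))) :
    x < 1 + lam := by
  have hexp : 0 < 1 - exp (-x) := by simpa using exp_lt_one_iff.2 (neg_neg_of_pos hx)
  nlinarith [exp_pos (-x)]

lemma le_of_eq_mul_one_sub_exp_neg (hx : 0 < x) (h : x = (1 + lam) * (1 - exp (-x))) :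
    lam ≤ x := by
  have hlt := lt_one_add_of_eq_mul_one_sub_exp_neg hx h
  have hrest : 1 + lam - x = (1 + lam) * exp (-x) := by linear_combination -h
  have hexp : exp x * (1 + lam - x) = 1 + lam := by
    rw [hrest, mul_left_comm, ← exp_add, add_neg_cancel, exp_zero, mul_one]
  nlinarith [mul_le_mul_of_nonneg_right (add_one_le_exp x) (sub_nonneg.2 hlt.le)]

lemma le_two_mul_of_eq_mul_one_sub_exp_neg (hlam : 0 < lam) (hx : 0 < x)
    (h : x = (1 + lam) * (1 - exp (-x))) : x ≤ 2 * lam := by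
  rw [← strictAntiOn_one_sub_exp_neg_div.le_iff_ge (by simpa using hlam) hx]
  have hf : (1 - exp (-x)) / x = 1 / (1 + lam) := by
    rw [div_eq_div_iff hx.ne' (by linarith)]
    linarith
  rw [hf, div_le_div_iff₀ (by linarith) (by linarith)]
  linarith [one_sub_le_one_add_mul_exp_neg_two_mul hlam.le]

end FixedPoint

theorem xi_bounds (xi : ℝ → ℝ)
    (hxi : ∀ lam : ℝ, 0 < lam →
      0 < xi lam ∧ xi lam = (1 + lam) * (1 - Real.exp (-(xi lam)))) :
    ∀ lam : ℝ, 0 < lam → lam ≤ xi lam ∧ xi lam ≤ min (2 * lam) (1 + lam) := by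
  intro lam hlam
  obtain ⟨hx, h⟩ := hxi lam hlam
  exact ⟨le_of_eq_mul_one_sub_exp_neg hx h,
    le_min (le_two_mul_of_eq_mul_one_sub_exp_neg hlam hx h)
      (lt_one_add_of_eq_mul_one_sub_exp_neg hx h).le⟩
end

section
/- Let ξ(λ) be the unique positive solution of ξ = (1+λ)(1-e^{-ξ}) for λ > 0. Then ξ is differentiable and ξ'(λ) = ξ(λ) / ((1+λ)(ξ(λ) - λ)), which is positive; hence ξ is strictly increasing. -/
/-!
Solving `ξ = (1 + λ)(1 - e^{-ξ})` for `λ` gives the explicit map `xiInv x = x / (1 - e^{-x}) - 1`.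
On `(0, ∞)` one has `0 < xiInv x < x` (both are forms of `1 + t < e^t`) and
`xiInv' x = (1 + xiInv x)(x - xiInv x) / x > 0`, so `xiInv` is a strictly increasing self-map of
`(0, ∞)` and `ξ` is its inverse there. The inverse function theorem gives `ξ' λ = 1 / xiInv' (ξ λ)`,
which is the claimed formula because `xiInv (ξ λ) = λ`.
-/

open Real Set Filter Topology

noncomputable def xiInv (x : ℝ) : ℝ := x / (1 - exp (-x)) - 1

lemma one_sub_exp_neg_pos {x : ℝ} (hx : 0 < x) : 0 < 1 - exp (-x) := by
  linarith [exp_lt_one_iff.mpr (neg_neg_of_pos hx)]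

lemma xiInv_pos {x : ℝ} (hx : 0 < x) : 0 < xiInv x := by
  rw [xiInv, sub_pos, one_lt_div (one_sub_exp_neg_pos hx)]
  linarith [one_sub_lt_exp_neg hx.ne']

lemma xiInv_lt_self {x : ℝ} (hx : 0 < x) : xiInv x < x := by
  have hE := one_sub_exp_neg_pos hx
  have hexp : (1 + x) * exp (-x) < 1 := by
    have := add_one_lt_exp hx.ne'
    rw [exp_neg, ← div_eq_mul_inv, div_lt_one (exp_pos x)]
    linarith
  rw [xiInv, sub_lt_iff_lt_add, div_lt_iff₀ hE]
  linarith

lemma hasStrictDerivAt_xiInv {x : ℝ} (hx : 0 < x) :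
    HasStrictDerivAt xiInv ((1 + xiInv x) * (x - xiInv x) / x) x := by
  have hE := one_sub_exp_neg_pos hx
  have hden : HasStrictDerivAt (fun y => 1 - exp (-y)) (exp (-x)) x := by
    simpa using ((hasStrictDerivAt_neg x).exp).const_sub 1
  have h : HasStrictDerivAt xiInv ((1 * (1 - exp (-x)) - x * exp (-x)) / (1 - exp (-x)) ^ 2) x :=
    ((hasStrictDerivAt_id x).div hden hE.ne').sub_const 1
  refine h.congr_deriv ?_
  rw [xiInv]
  field_simp
  ring

lemma strictMonoOn_xiInv : StrictMonoOn xiInv (Ioi 0) := by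
  refine strictMonoOn_of_hasDerivWithinAt_pos (f' := fun x => (1 + xiInv x) * (x - xiInv x) / x)
    (convex_Ioi 0)
    (fun x hx => (hasStrictDerivAt_xiInv hx).hasDerivAt.continuousAt.continuousWithinAt)
    (fun x hx => ?_) (fun x hx => ?_) <;> rw [interior_Ioi] at hx
  · exact (hasStrictDerivAt_xiInv hx).hasDerivAt.hasDerivWithinAt
  · have := xiInv_pos hx
    exact div_pos (mul_pos (by linarith) (sub_pos.2 (xiInv_lt_self hx))) hx

section

variable {xi : ℝ → ℝ}
  (hxi : ∀ lam : ℝ, 0 < lam → 0 < xi lam ∧ xi lam = (1 + lam) * (1 - exp (-(xi lam))))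
include hxi

lemma xiInv_xi {lam : ℝ} (hlam : 0 < lam) : xiInv (xi lam) = lam := by
  obtain ⟨hpos, heq⟩ := hxi lam hlam
  rw [xiInv, sub_eq_iff_eq_add, div_eq_iff (one_sub_exp_neg_pos hpos).ne', add_comm]
  exact heq

lemma xi_xiInv {x : ℝ} (hx : 0 < x) : xi (xiInv x) = x :=
  strictMonoOn_xiInv.injOn (hxi _ (xiInv_pos hx)).1 hx (xiInv_xi hxi (xiInv_pos hx))

lemma lt_xi {lam : ℝ} (hlam : 0 < lam) : lam < xi lam := by
  simpa only [xiInv_xi hxi hlam] using xiInv_lt_self (hxi lam hlam).1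

lemma hasDerivAt_xi {lam : ℝ} (hlam : 0 < lam) :
    HasDerivAt xi (xi lam / ((1 + lam) * (xi lam - lam))) lam := by
  have hpos := (hxi lam hlam).1
  have hinv : ∀ᶠ x in 𝓝 (xi lam), xi (xiInv x) = x :=
    eventually_of_mem (Ioi_mem_nhds hpos) fun x hx => xi_xiInv hxi hx
  have hderiv_ne : (1 + lam) * (xi lam - lam) / xi lam ≠ 0 := by
    have := lt_xi hxi hlam
    positivity
  have h := hasStrictDerivAt_xiInv hpos
  rw [xiInv_xi hxi hlam] at h
  simpa only [xiInv_xi hxi hlam, inv_div] using (h.to_local_left_inverse hderiv_ne hinv).hasDerivAt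

lemma strictMonoOn_xi : StrictMonoOn xi (Ioi 0) := fun a ha b hb hab => by
  rwa [← strictMonoOn_xiInv.lt_iff_lt (hxi a ha).1 (hxi b hb).1, xiInv_xi hxi ha, xiInv_xi hxi hb]

end

theorem xi_deriv (xi : ℝ → ℝ)
    (hxi : ∀ lam : ℝ, 0 < lam →
      0 < xi lam ∧ xi lam = (1 + lam) * (1 - Real.exp (-(xi lam)))) :
    (∀ lam : ℝ, 0 < lam →
      HasDerivAt xi (xi lam / ((1 + lam) * (xi lam - lam))) lam ∧
      0 < xi lam / ((1 + lam) * (xi lam - lam))) ∧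
    StrictMonoOn xi (Set.Ioi (0 : ℝ)) := by
  refine ⟨fun lam hlam => ⟨hasDerivAt_xi hxi hlam, ?_⟩, strictMonoOn_xi hxi⟩
  have := (hxi lam hlam).1
  have := lt_xi hxi hlam
  positivity
end

section
/- Let ξ(λ) be the unique positive solution of ξ = (1+λ)(1-e^{-ξ}) for λ > 0, and set v(λ) = (1+λ)(ξ(λ) - λ)/2. Then 2 v(λ) ≥ λ for all λ > 0. -/
/-!
Put `u = 1 + λ`. The equation for `ξ` says `log (u - ξ) = log u - ξ`, and the claim amounts to
`ξ ≥ u - u⁻¹`. If `0 < ξ < u - u⁻¹`, then `u - ξ` is a proper convex combination of `u` and `u⁻¹`,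
so strict concavity of `log` gives `log u - ξ > (1 - 2θ) log u` with `θ = ξ / (u - u⁻¹)`, i.e.
`ξ < 2θ log u`; but `2 log u ≤ u - u⁻¹` (this is `s ≤ sinh s` at `s = log u`) turns this into
`ξ < ξ`.
-/

open Real Set

lemma two_mul_log_le_sub_inv {u : ℝ} (hu : 1 ≤ u) : 2 * log u ≤ u - u⁻¹ := by
  have h := self_le_sinh_iff.2 (log_nonneg hu)
  rw [sinh_log (by linarith)] at h
  linarith

lemma log_sub_eq_of_eq_mul_one_sub_exp {u ξ : ℝ} (hu : 0 < u) (hξ : ξ = u * (1 - exp (-ξ))) :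
    log (u - ξ) = log u - ξ := by
  have hsub : u - ξ = u * exp (-ξ) := by linear_combination -hξ
  rw [hsub, log_mul hu.ne' (exp_pos _).ne', log_exp]
  ring

lemma sub_inv_le_of_eq_mul_one_sub_exp {u ξ : ℝ} (hu : 1 < u) (hξ0 : 0 < ξ)
    (hξ : ξ = u * (1 - exp (-ξ))) : u - u⁻¹ ≤ ξ := by
  by_contra! hlt
  set x₀ := u - u⁻¹
  set θ := ξ / x₀
  have hu0 : 0 < u := by linarith
  have hx₀ : 0 < x₀ := hξ0.trans hlt
  have hθ0 : 0 < θ := div_pos hξ0 hx₀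
  have hθ1 : θ < 1 := (div_lt_one hx₀).2 hlt
  have hθx₀ : θ * x₀ = ξ := div_mul_cancel₀ ξ hx₀.ne'
  have hne : u ≠ u⁻¹ := fun h => by
    have : u * u = 1 := by rw [← mul_inv_cancel₀ hu0.ne', ← h]
    nlinarith
  have hconc := strictConcaveOn_log_Ioi.2 (mem_Ioi.2 hu0) (mem_Ioi.2 (inv_pos.2 hu0)) hne
    (sub_pos.2 hθ1) hθ0 (by ring)
  have hcomb : (1 - θ) • u + θ • u⁻¹ = u - ξ := by
    rw [smul_eq_mul, smul_eq_mul, ← hθx₀]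
    ring
  rw [hcomb, log_sub_eq_of_eq_mul_one_sub_exp hu0 hξ, smul_eq_mul, smul_eq_mul, log_inv]
    at hconc
  nlinarith [two_mul_log_le_sub_inv hu.le]

theorem two_v_ge_lam (xi v : ℝ → ℝ)
    (hxi : ∀ lam : ℝ, 0 < lam →
      0 < xi lam ∧ xi lam = (1 + lam) * (1 - Real.exp (-(xi lam))))
    (hv : ∀ lam : ℝ, v lam = (1 + lam) * (xi lam - lam) / 2) :
    ∀ lam : ℝ, 0 < lam → lam ≤ 2 * v lam := by
  intro lam hlam
  obtain ⟨hξ0, hξ⟩ := hxi lam hlam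
  have hlow := sub_inv_le_of_eq_mul_one_sub_exp (by linarith) hξ0 hξ
  have hx₀ : (1 + lam) * ((1 + lam) - (1 + lam)⁻¹ - lam) = lam := by
    field_simp
    ring
  have hmul := mul_le_mul_of_nonneg_left (sub_le_sub_right hlow lam) (by linarith : 0 ≤ 1 + lam)
  rw [hv lam]
  linarith
end

section
/- For every ξ > 0 and every θ ∈ [-π, π], |(e^{ξ e^{iθ}} - 1)/(ξ e^{iθ})| ≤ ((e^{ξ}-1)/ξ) · (1 - h(ξ) θ²), where h(ξ) = (1/π²) · 2ξ² / ((2+ξ)(e^{ξ}-1)). -/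
/-!
Split `exp z - 1 = (z + z²/2) + (exp z - 1 - z - z²/2)`. The cubic tail is dominated termwise by
the real one, `exp r - 1 - r - r²/2` with `r = ‖z‖`, while `‖z + z²/2‖ = r ‖1 + z/2‖` falls short
of `r + r²/2` by a multiple of `r - re z = r (1 - cos θ)`. Jordan's inequality
`1 - cos θ ≥ 2θ²/π²` on `[-π, π]` turns this deficit into the factor `1 - h(ξ) θ²`.
-/

namespace Complex

theorem norm_exp_sub_one_sub_sub_le (z : ℂ) :
    ‖exp z - 1 - z - z ^ 2 / 2‖ ≤ Real.exp ‖z‖ - 1 - ‖z‖ - ‖z‖ ^ 2 / 2 := by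
  simpa [Finset.sum_range_succ, sub_sub] using norm_exp_sub_sum_le_exp_norm_sub_sum z 3

theorem norm_one_add_half_le (z : ℂ) :
    ‖1 + z / 2‖ ≤ 1 + ‖z‖ / 2 - (‖z‖ - z.re) / (2 + ‖z‖) := by
  set r := ‖z‖
  set d := (r - z.re) / (2 + r)
  have hr : 0 ≤ r := norm_nonneg z
  have hd : d * (2 + r) = r - z.re := div_mul_cancel₀ _ (by positivity)
  -- `‖1 + z/2‖² = (1 + r/2)² - (r - re z)`, and `(1 + r/2 - d)² = (1 + r/2)² - (r - re z) + d²`.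
  have hsq : ‖1 + z / 2‖ ^ 2 = (1 + r / 2) ^ 2 - (r - z.re) := by
    have hnorm_sq : r ^ 2 = z.re ^ 2 + z.im ^ 2 := by rw [Complex.sq_norm, normSq_apply]; ring
    rw [Complex.sq_norm, normSq_apply]
    simp only [add_re, one_re, div_ofNat_re, add_im, one_im, div_ofNat_im]
    linear_combination -hnorm_sq / 4
  have hd_le : d ≤ 1 + r / 2 := by
    rw [div_le_iff₀ (by positivity)]; nlinarith [neg_abs_le z.re, abs_re_le_norm z]
  refine (pow_le_pow_iff_left₀ (norm_nonneg _) (by linarith) two_ne_zero).1 ?_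
  rw [hsq]
  nlinarith [sq_nonneg d]

theorem norm_exp_sub_one_le_exp_norm_sub_one_sub (z : ℂ) :
    ‖exp z - 1‖ ≤ Real.exp ‖z‖ - 1 - ‖z‖ * (‖z‖ - z.re) / (2 + ‖z‖) := by
  have hquad : ‖z + z ^ 2 / 2‖ ≤ ‖z‖ + ‖z‖ ^ 2 / 2 - ‖z‖ * (‖z‖ - z.re) / (2 + ‖z‖) := by
    calc ‖z + z ^ 2 / 2‖ = ‖z‖ * ‖1 + z / 2‖ := by rw [← norm_mul]; ring_nf
      _ ≤ ‖z‖ * (1 + ‖z‖ / 2 - (‖z‖ - z.re) / (2 + ‖z‖)) := by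
        gcongr; exact norm_one_add_half_le z
      _ = _ := by ring
  calc ‖exp z - 1‖ = ‖(exp z - 1 - z - z ^ 2 / 2) + (z + z ^ 2 / 2)‖ := by ring_nf
    _ ≤ ‖exp z - 1 - z - z ^ 2 / 2‖ + ‖z + z ^ 2 / 2‖ := norm_add_le _ _
    _ ≤ _ := by linarith [norm_exp_sub_one_sub_sub_le z]

end Complex

open Complex in
theorem B_tail_bound (xi : ℝ) (hxi : 0 < xi) (θ : ℝ)
    (hθ : θ ∈ Set.Icc (-Real.pi) Real.pi) :
    ‖(Complex.exp (xi * Complex.exp (θ * Complex.I)) - 1) /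
        (xi * Complex.exp (θ * Complex.I))‖ ≤
      ((Real.exp xi - 1) / xi) *
        (1 - (1 / Real.pi ^ 2) * (2 * xi ^ 2 / ((2 + xi) * (Real.exp xi - 1))) * θ ^ 2) := by
  set z : ℂ := xi * exp (θ * I)
  have hnorm : ‖z‖ = xi := by simp [z, norm_exp_ofReal_mul_I, hxi.le]
  have hre : z.re = xi * Real.cos θ := by simp [z, exp_ofReal_mul_I_re]
  have hjordan : 2 / Real.pi ^ 2 * θ ^ 2 ≤ 1 - Real.cos θ := by
    linarith [Real.cos_le_one_sub_mul_cos_sq (abs_le.2 hθ)]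
  have hexp : 0 < Real.exp xi - 1 := by linarith [Real.add_one_lt_exp hxi.ne']
  have hbound := norm_exp_sub_one_le_exp_norm_sub_one_sub z
  rw [hnorm, hre, show xi * (xi - xi * Real.cos θ) = xi ^ 2 * (1 - Real.cos θ) by ring] at hbound
  have hrhs : (Real.exp xi - 1) / xi *
        (1 - 1 / Real.pi ^ 2 * (2 * xi ^ 2 / ((2 + xi) * (Real.exp xi - 1))) * θ ^ 2) =
      (Real.exp xi - 1 - xi ^ 2 * (2 / Real.pi ^ 2 * θ ^ 2) / (2 + xi)) / xi := by
    field_simp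
  rw [norm_div, hnorm, hrhs]
  gcongr
  refine hbound.trans ?_
  gcongr
end

section
/- For nonnegative real numbers b₀, b₁ and θ ∈ ℝ, |b₀ + b₁ e^{iθ}| ≤ b₀ + b₁ - 2 b₀ b₁ sin²(θ/2) / (b₀ + b₁), provided b₀ + b₁ > 0. -/
/-!
Writing `s = b₀ + b₁` and `c = 2 b₀ b₁ sin²(θ/2)`, the half-angle formula gives
`‖b₀ + b₁ e^{iθ}‖² = s² - 2c`. The claim is then the tangent-line bound
`√(s² - 2c) ≤ s - c / s` for the concave function `c ↦ √(s² - 2c)` at `c = 0`.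
-/

open Real

theorem Real.sqrt_sq_sub_two_mul_le {s c : ℝ} (hs : 0 < s) (hc : c ≤ s ^ 2) :
    √(s ^ 2 - 2 * c) ≤ s - c / s := by
  have hcs : c / s ≤ s := by rwa [div_le_iff₀ hs, ← sq]
  rw [sqrt_le_left (sub_nonneg.2 hcs)]
  calc s ^ 2 - 2 * c ≤ s ^ 2 - 2 * c + (c / s) ^ 2 := le_add_of_nonneg_right (sq_nonneg _)
    _ = (s - c / s) ^ 2 := by field_simp; ring

theorem Complex.norm_ofReal_add_mul_exp_sq (a b θ : ℝ) :
    ‖(a : ℂ) + b * Complex.exp (θ * Complex.I)‖ ^ 2 =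
      (a + b) ^ 2 - 2 * (2 * a * b * Real.sin (θ / 2) ^ 2) := by
  have hcos : Real.cos θ = 1 - 2 * Real.sin (θ / 2) ^ 2 := by
    rw [← Real.cos_two_mul_eq_one_sub, mul_div_cancel₀ _ two_ne_zero]
  rw [Complex.sq_norm, Complex.normSq_apply, Complex.exp_mul_I, ← Complex.ofReal_cos,
    ← Complex.ofReal_sin]
  simp only [Complex.add_re, Complex.add_im, Complex.mul_re, Complex.mul_im, Complex.ofReal_re,
    Complex.ofReal_im, Complex.I_re, Complex.I_im]
  linear_combination b ^ 2 * Real.sin_sq_add_cos_sq θ + 2 * a * b * hcos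

theorem abs_add_exp_bound_general (b₀ b₁ θ : ℝ) (hsum : 0 < b₀ + b₁) :
    ‖(b₀ : ℂ) + b₁ * Complex.exp (θ * Complex.I)‖ ≤
      b₀ + b₁ - 2 * b₀ * b₁ * Real.sin (θ / 2) ^ 2 / (b₀ + b₁) := by
  have hnorm := Complex.norm_ofReal_add_mul_exp_sq b₀ b₁ θ
  have hc : 2 * b₀ * b₁ * sin (θ / 2) ^ 2 ≤ (b₀ + b₁) ^ 2 := by
    nlinarith [sq_nonneg ‖(b₀ : ℂ) + b₁ * Complex.exp (θ * Complex.I)‖]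
  calc ‖(b₀ : ℂ) + b₁ * Complex.exp (θ * Complex.I)‖
      = √((b₀ + b₁) ^ 2 - 2 * (2 * b₀ * b₁ * sin (θ / 2) ^ 2)) := by
        rw [← hnorm, sqrt_sq (norm_nonneg _)]
    _ ≤ _ := Real.sqrt_sq_sub_two_mul_le hsum hc

theorem abs_add_exp_bound (b₀ b₁ θ : ℝ) (h₀ : 0 ≤ b₀) (h₁ : 0 ≤ b₁)
    (hsum : 0 < b₀ + b₁) :
    ‖(b₀ : ℂ) + b₁ * Complex.exp (θ * Complex.I)‖ ≤
      b₀ + b₁ - 2 * b₀ * b₁ * Real.sin (θ / 2) ^ 2 / (b₀ + b₁) :=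
  abs_add_exp_bound_general b₀ b₁ θ hsum
end

section
/- Fix an integer k ≥ 2 and 0 < a < 1/(4 e^k). For n ≥ 2, let ω₁, ω₂, … be i.i.d. uniform on {1,…,n}, and let y_m = #{ω₁,…,ω_m}. Then P(∃ ℓ with 1 ≤ ℓ ≤ an such that y_{kℓ+1} ≤ ℓ) ≤ 2/n². -/
open MeasureTheory ProbabilityTheory Finset Real
open scoped ENNReal

/-!
If at most `ℓ` distinct coupons appear among the first `kℓ + 1` draws, all these draws land in
some `ℓ`-set of coupons, so by independence and a union bound over such sets the event has
probability at most `t ℓ = C(n, ℓ) (ℓ / n)^(kℓ + 1)`. For `ℓ + 1 ≤ a n`, using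
`(1 + 1/ℓ)^ℓ ≤ e` and `a^(k-1) ≤ a`, one gets `t (ℓ + 1) ≤ 2 e^k a · t ℓ ≤ t ℓ / 2`,
so the union bound over `ℓ` is dominated by the geometric series `2 t 1 = 2 / n^k ≤ 2 / n²`.
-/

section FewDistinctValues

variable {Ω ι α : Type*} [MeasurableSpace Ω] {μ : Measure Ω} {c : ℝ≥0∞}

lemma measure_preimage_finset_le {f : Ω → α} (hf : ∀ x, μ {ω | f ω = x} ≤ c) (S : Finset α) :
    μ (f ⁻¹' S) ≤ #S * c :=
  calc μ (f ⁻¹' S) = μ (⋃ x ∈ S, {ω | f ω = x}) := by congr 1; ext; simp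
    _ ≤ ∑ x ∈ S, μ {ω | f ω = x} := measure_biUnion_finset_le _ _
    _ ≤ ∑ _x ∈ S, c := sum_le_sum fun x _ => hf x
    _ = #S * c := by simp

variable [MeasurableSpace α] [MeasurableSingletonClass α] {X : ι → Ω → α}

lemma measure_biInter_preimage_finset_le (hindep : iIndepFun X μ)
    (hX : ∀ i x, μ {ω | X i ω = x} ≤ c) (I : Finset ι) (S : Finset α) :
    μ (⋂ i ∈ I, X i ⁻¹' S) ≤ (#S * c) ^ #I := by
  rw [hindep.meas_biInter fun i _ => ⟨S, S.measurableSet, rfl⟩]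
  exact prod_le_pow_card _ _ _ fun i _ => measure_preimage_finset_le (hX i) S

lemma measure_card_image_le [Fintype α] [DecidableEq α] (hindep : iIndepFun X μ)
    (hX : ∀ i x, μ {ω | X i ω = x} ≤ c) (I : Finset ι) {ℓ : ℕ} (hℓ : ℓ ≤ Fintype.card α) :
    μ {ω | #(I.image fun i => X i ω) ≤ ℓ} ≤ (Fintype.card α).choose ℓ * (ℓ * c) ^ #I := by
  have hcover : {ω | #(I.image fun i => X i ω) ≤ ℓ} ⊆
      ⋃ S ∈ powersetCard ℓ (univ : Finset α), ⋂ i ∈ I, X i ⁻¹' S := by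
    intro ω hω
    obtain ⟨S, hsub, -, hcard⟩ := exists_subsuperset_card_eq (subset_univ _) hω (by simpa using hℓ)
    simp only [Set.mem_iUnion, Set.mem_iInter]
    exact ⟨S, mem_powersetCard.2 ⟨subset_univ S, hcard⟩,
      fun i hi => hsub (mem_image_of_mem _ hi)⟩
  calc μ {ω | #(I.image fun i => X i ω) ≤ ℓ}
      ≤ ∑ S ∈ powersetCard ℓ (univ : Finset α), μ (⋂ i ∈ I, X i ⁻¹' S) :=
        (measure_mono hcover).trans (measure_biUnion_finset_le _ _)
    _ ≤ ∑ _S ∈ powersetCard ℓ (univ : Finset α), (ℓ * c) ^ #I := sum_le_sum fun S hS => by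
        simpa only [(mem_powersetCard.1 hS).2] using
          measure_biInter_preimage_finset_le hindep hX I S
    _ = (Fintype.card α).choose ℓ * (ℓ * c) ^ #I := by simp

end FewDistinctValues

lemma add_one_pow_le_exp_mul_pow (k ℓ : ℕ) :
    ((ℓ : ℝ) + 1) ^ (k * ℓ) ≤ exp k * (ℓ : ℝ) ^ (k * ℓ) := by
  rcases Nat.eq_zero_or_pos ℓ with rfl | hℓ
  · simp [one_le_exp (Nat.cast_nonneg k)]
  have hℓ' : (ℓ : ℝ) ≠ 0 := by positivity
  calc ((ℓ : ℝ) + 1) ^ (k * ℓ) = ((1 + (ℓ : ℝ)⁻¹) ^ ℓ) ^ k * (ℓ : ℝ) ^ (k * ℓ) := by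
        rw [← pow_mul, mul_comm ℓ k, ← mul_pow]; congr 1; field_simp
    _ ≤ exp 1 ^ k * (ℓ : ℝ) ^ (k * ℓ) := by gcongr; exact one_add_inv_pow_le_exp
    _ = exp k * (ℓ : ℝ) ^ (k * ℓ) := by rw [← exp_nat_mul, mul_one]

lemma choose_succ_mul_le (n ℓ : ℕ) : n.choose (ℓ + 1) * (ℓ + 1) ≤ n.choose ℓ * n := by
  rw [Nat.choose_succ_right_eq]; exact Nat.mul_le_mul_left _ (Nat.sub_le n ℓ)

noncomputable def couponTerm (n k ℓ : ℕ) : ℝ := n.choose ℓ * ((ℓ : ℝ) / n) ^ (k * ℓ + 1)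

lemma couponTerm_nonneg (n k ℓ : ℕ) : 0 ≤ couponTerm n k ℓ := by
  unfold couponTerm; positivity

lemma couponTerm_one (k : ℕ) {n : ℕ} (hn : n ≠ 0) : couponTerm n k 1 = 1 / (n : ℝ) ^ k := by
  simp only [couponTerm, Nat.choose_one_right, Nat.cast_one, mul_one, pow_succ, div_pow, one_pow]
  field_simp

lemma couponTerm_succ_le {n k ℓ : ℕ} {a : ℝ} (hk : 2 ≤ k) (hℓ : 1 ≤ ℓ) (ha₀ : 0 ≤ a) (ha₁ : a ≤ 1)
    (hℓa : (ℓ : ℝ) + 1 ≤ a * n) :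
    couponTerm n k (ℓ + 1) ≤ 2 * exp k * a * couponTerm n k ℓ := by
  have hn : (0 : ℝ) < n :=
    pos_of_mul_pos_right (by linarith [(Nat.cast_nonneg ℓ : (0 : ℝ) ≤ ℓ)]) ha₀
  set x : ℝ := ℓ / n
  set y : ℝ := ((ℓ : ℝ) + 1) / n
  have hx : 0 ≤ x := by positivity
  have hy : 0 ≤ y := by positivity
  have hchoose : (n.choose (ℓ + 1) : ℝ) * y ≤ n.choose ℓ := by
    rw [mul_div_assoc', div_le_iff₀ hn]; exact_mod_cast choose_succ_mul_le n ℓ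
  have hexp : y ^ (k * ℓ) ≤ exp k * x ^ (k * ℓ) := by
    simp only [y, x, div_pow, ← mul_div_assoc]
    gcongr
    exact add_one_pow_le_exp_mul_pow k ℓ
  have hya : y ≤ a := by rw [div_le_iff₀ hn]; exact hℓa
  have hyx : y ≤ 2 * x := by
    rw [mul_div_assoc']
    have : (1 : ℝ) ≤ ℓ := by exact_mod_cast hℓ
    exact div_le_div_of_nonneg_right (by linarith) hn.le
  have hyk : y ^ k ≤ 2 * a * x := by
    obtain ⟨j, rfl⟩ : ∃ j, k = j + 1 + 1 := ⟨k - 2, by omega⟩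
    calc y ^ (j + 1 + 1) = y ^ (j + 1) * y := pow_succ _ _
      _ ≤ a ^ (j + 1) * (2 * x) := by gcongr
      _ ≤ a * (2 * x) := by gcongr; exact pow_le_of_le_one ha₀ ha₁ (by omega)
      _ = 2 * a * x := by ring
  calc couponTerm n k (ℓ + 1) = (n.choose (ℓ + 1) * y) * y ^ (k * ℓ) * y ^ k := by
        simp only [couponTerm, y]; push_cast; ring
    _ ≤ n.choose ℓ * (exp k * x ^ (k * ℓ)) * (2 * a * x) := by gcongr
    _ = 2 * exp k * a * couponTerm n k ℓ := by simp only [couponTerm, x]; ring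

lemma sum_Icc_le_two_mul_of_le_half {t : ℕ → ℝ} {L : ℕ} (ht : ∀ ℓ, 0 ≤ t ℓ)
    (hhalf : ∀ ℓ, 1 ≤ ℓ → ℓ + 1 ≤ L → t (ℓ + 1) ≤ t ℓ / 2) :
    ∑ ℓ ∈ Icc 1 L, t ℓ ≤ 2 * t 1 := by
  rcases Nat.eq_zero_or_pos L with rfl | hL
  · simpa using ht 1
  suffices ∑ ℓ ∈ Icc 1 L, t ℓ + t L ≤ 2 * t 1 by linarith [ht L]
  induction L, hL using Nat.le_induction with
  | base => simp only [Icc_self, sum_singleton]; linarith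
  | succ L hL ih =>
    rw [sum_Icc_succ_top (by omega)]
    have := hhalf L hL le_rfl
    linarith [ih fun ℓ h₁ h₂ => hhalf ℓ h₁ (by omega)]

lemma sum_couponTerm_le {n k : ℕ} {a : ℝ} (hk : 2 ≤ k) (hn : 1 ≤ n) (ha₀ : 0 ≤ a)
    (ha₁ : a ≤ 1) (hae : 4 * exp k * a ≤ 1) :
    ∑ ℓ ∈ Icc 1 ⌊a * n⌋₊, couponTerm n k ℓ ≤ 2 / (n : ℝ) ^ 2 := by
  have hn' : (1 : ℝ) ≤ n := by exact_mod_cast hn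
  calc ∑ ℓ ∈ Icc 1 ⌊a * n⌋₊, couponTerm n k ℓ ≤ 2 * couponTerm n k 1 := by
        refine sum_Icc_le_two_mul_of_le_half (couponTerm_nonneg n k) fun ℓ hℓ hℓL => ?_
        have hℓa : ((ℓ + 1 : ℕ) : ℝ) ≤ a * n := (Nat.le_floor_iff (by positivity)).1 hℓL
        push_cast at hℓa
        calc couponTerm n k (ℓ + 1) ≤ 2 * exp k * a * couponTerm n k ℓ :=
              couponTerm_succ_le hk hℓ ha₀ ha₁ hℓa
          _ ≤ couponTerm n k ℓ / 2 := by nlinarith [couponTerm_nonneg n k ℓ]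
    _ = 2 / (n : ℝ) ^ k := by rw [couponTerm_one k (by omega)]; ring
    _ ≤ 2 / (n : ℝ) ^ 2 := by gcongr

theorem early_crossing_bound_general
    {Ω : Type*} [MeasurableSpace Ω] (μ : Measure Ω)
    (k : ℕ) (hk : 2 ≤ k) (a : ℝ) (ha : 0 < a) (ha' : a < 1 / (4 * Real.exp k))
    (n : ℕ) (hn : 2 ≤ n) (X : ℕ → Ω → Fin n)
    (hindep : iIndepFun X μ)
    (hunif : ∀ i (x : Fin n), μ {ω | X i ω = x} = 1 / (n : ENNReal)) :
    μ {ω | ∃ ℓ : ℕ, 1 ≤ ℓ ∧ (ℓ : ℝ) ≤ a * n ∧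
        ((Finset.range (k * ℓ + 1)).image (fun i => X i ω)).card ≤ ℓ} ≤
      2 / ((n : ENNReal) ^ 2) := by
  have hae : 4 * exp k * a ≤ 1 := by
    rw [lt_div_iff₀ (by positivity)] at ha'; linarith
  have hn₀ : (0 : ℝ) < n := by positivity
  have ha₁ : a ≤ 1 := by nlinarith [one_le_exp (Nat.cast_nonneg k : (0 : ℝ) ≤ k)]
  have hLn : ⌊a * n⌋₊ ≤ Fintype.card (Fin n) := by
    simpa using Nat.floor_le_floor (mul_le_of_le_one_left hn₀.le ha₁)
  calc μ {ω | ∃ ℓ : ℕ, 1 ≤ ℓ ∧ (ℓ : ℝ) ≤ a * n ∧ #((range (k * ℓ + 1)).image fun i => X i ω) ≤ ℓ}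
      ≤ ∑ ℓ ∈ Icc 1 ⌊a * n⌋₊, μ {ω | #((range (k * ℓ + 1)).image fun i => X i ω) ≤ ℓ} := by
        refine (measure_mono ?_).trans (measure_biUnion_finset_le _ _)
        rintro ω ⟨ℓ, h₁, h₂, h₃⟩
        exact Set.mem_biUnion (mem_Icc.2 ⟨h₁, Nat.le_floor h₂⟩) h₃
    _ ≤ ∑ ℓ ∈ Icc 1 ⌊a * n⌋₊, ENNReal.ofReal (couponTerm n k ℓ) := sum_le_sum fun ℓ hℓ => by
        refine (measure_card_image_le hindep (fun i x => (hunif i x).le) _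
          ((mem_Icc.1 hℓ).2.trans hLn)).trans_eq ?_
        rw [couponTerm, ENNReal.ofReal_mul (by positivity), ENNReal.ofReal_pow (by positivity),
          ENNReal.ofReal_div_of_pos hn₀]
        simp [div_eq_mul_inv]
    _ = ENNReal.ofReal (∑ ℓ ∈ Icc 1 ⌊a * n⌋₊, couponTerm n k ℓ) :=
        (ENNReal.ofReal_sum_of_nonneg fun ℓ _ => couponTerm_nonneg n k ℓ).symm
    _ ≤ ENNReal.ofReal (2 / (n : ℝ) ^ 2) :=
        ENNReal.ofReal_le_ofReal (sum_couponTerm_le hk (by omega) ha.le ha₁ hae)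
    _ = 2 / (n : ℝ≥0∞) ^ 2 := by
        rw [ENNReal.ofReal_div_of_pos (by positivity)]; norm_cast

/-- In the coupon collector problem with `n` coupons, for `k ≥ 2` and
`0 < a < 1/(4 e^k)`, the probability that for some `1 ≤ ℓ ≤ a n` the number of
distinct coupons collected after `kℓ + 1` draws is at most `ℓ` is at most `2/n²`. -/
theorem early_crossing_bound
    {Ω : Type*} [MeasurableSpace Ω] (μ : Measure Ω) [IsProbabilityMeasure μ]
    (k : ℕ) (hk : 2 ≤ k) (a : ℝ) (ha : 0 < a) (ha' : a < 1 / (4 * Real.exp k))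
    (n : ℕ) (hn : 2 ≤ n) (X : ℕ → Ω → Fin n)
    (hmeas : ∀ i, Measurable (X i))
    (hindep : iIndepFun X μ)
    (hunif : ∀ i (x : Fin n), μ {ω | X i ω = x} = 1 / (n : ENNReal)) :
    μ {ω | ∃ ℓ : ℕ, 1 ≤ ℓ ∧ (ℓ : ℝ) ≤ a * n ∧
        ((Finset.range (k * ℓ + 1)).image (fun i => X i ω)).card ≤ ℓ} ≤
      2 / ((n : ENNReal) ^ 2) :=
  early_crossing_bound_general μ k hk a ha ha' n hn X hindep hunif
end

section
/- Fix x₀ > y₀ > 0 and let ξ(λ) be the implicit function with ξ = (1+λ)(1-e^{-ξ}). Let ζ solve the ODE y' = e^{-ξ(x/y - 1)} on (0, x₀] with ζ(x₀) = y₀, and suppose 0 < ζ(x) < x throughout. Then for all 0 < x ≤ x₀: x / (1 + x(1/y₀ - 1/x₀)) ≤ ζ(x) ≤ x (1 - (x/x₀)(1 - y₀/x₀)). -/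
/-!
Write `r = t / ζ t = 1 + λ` and `v = ξ(λ)`, so that `v = r (1 - e^{-v})` and `ζ' = e^{-v}`.
The elementary inequalities `v e^{-v/2} ≤ 1 - e^{-v}` (that is, `v/2 ≤ sinh (v/2)`) and
`2 (1 - e^{-v}) ≤ v (1 + e^{-v})` (that is, `tanh (v/2) ≤ v/2`) turn the fixed-point equation
into `r² e^{-v} ≤ 1` and `2 ≤ r (1 + e^{-v})`. These are exactly the statements that
`1/ζ t - 1/t` and `ζ t / t² - 1/t` are nondecreasing, and comparing their values at `x` and at
`x₀` gives the two bounds.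
-/

open Real Set

lemma two_mul_one_sub_exp_neg_le {t : ℝ} (ht : 0 ≤ t) :
    2 * (1 - exp (-t)) ≤ t * (1 + exp (-t)) := by
  have hderiv : ∀ s, HasDerivAt (fun s => s * (1 + exp (-s)) - 2 * (1 - exp (-s)))
      (1 - (1 + s) * exp (-s)) s := by
    intro s
    have he : HasDerivAt (fun u => exp (-u)) (-exp (-s)) s := by
      simpa using (hasDerivAt_neg s).exp
    exact (((hasDerivAt_id' s).mul (he.const_add 1)).sub
      ((he.const_sub 1).const_mul 2)).congr_deriv (by ring)
  have hderiv_nonneg : ∀ s, 0 ≤ 1 - (1 + s) * exp (-s) := by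
    intro s
    have : (1 + s) * exp (-s) ≤ exp s * exp (-s) :=
      mul_le_mul_of_nonneg_right (by linarith [add_one_le_exp s]) (exp_pos _).le
    rw [← exp_add, add_neg_cancel, exp_zero] at this
    linarith
  simpa using monotone_of_hasDerivAt_nonneg hderiv hderiv_nonneg ht

lemma mul_exp_neg_half_le {t : ℝ} (ht : 0 ≤ t) : t * exp (-(t / 2)) ≤ 1 - exp (-t) := by
  have hsinh : t / 2 ≤ sinh (t / 2) := self_le_sinh_iff.mpr (by positivity)
  have hprod : (exp (t / 2) - exp (-(t / 2))) * exp (-(t / 2)) = 1 - exp (-t) := by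
    rw [sub_mul, ← exp_add, ← exp_add]; ring_nf; simp
  rw [sinh_eq] at hsinh
  rw [← hprod]
  exact mul_le_mul_of_nonneg_right (by linarith) (exp_pos _).le

section FixedPoint

variable {r v : ℝ}

lemma sq_mul_exp_neg_le_one (hv : 0 < v) (h : v = r * (1 - exp (-v))) :
    r ^ 2 * exp (-v) ≤ 1 := by
  have h1e : 0 < 1 - exp (-v) := by linarith [exp_lt_one_iff.mpr (neg_neg_of_pos hv)]
  have hr : 0 < r := pos_of_mul_pos_left (h ▸ hv) h1e.le
  have hB : (1 - exp (-v)) * (r * exp (-(v / 2))) ≤ (1 - exp (-v)) * 1 := by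
    have := mul_exp_neg_half_le hv.le
    nth_rewrite 1 [h] at this
    linarith
  have hhalf : exp (-v) = exp (-(v / 2)) ^ 2 := by rw [← exp_nat_mul]; ring_nf
  rw [hhalf, ← mul_pow]
  exact pow_le_one₀ (mul_pos hr (exp_pos _)).le (le_of_mul_le_mul_left hB h1e)

lemma two_le_mul_one_add_exp_neg (hv : 0 < v) (h : v = r * (1 - exp (-v))) :
    2 ≤ r * (1 + exp (-v)) := by
  have h1e : 0 < 1 - exp (-v) := by linarith [exp_lt_one_iff.mpr (neg_neg_of_pos hv)]
  have hA : (1 - exp (-v)) * 2 ≤ (1 - exp (-v)) * (r * (1 + exp (-v))) := by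
    have := two_mul_one_sub_exp_neg_le hv.le
    nth_rewrite 2 [h] at this
    linarith
  exact le_of_mul_le_mul_left hA h1e

end FixedPoint

theorem Convex.monotoneOn_of_hasDerivAt_nonneg {D : Set ℝ} (hD : Convex ℝ D) {f f' : ℝ → ℝ}
    (hf : ∀ x ∈ D, HasDerivAt f (f' x) x) (hf' : ∀ x ∈ D, 0 ≤ f' x) : MonotoneOn f D :=
  monotoneOn_of_hasDerivWithinAt_nonneg hD
    (fun x hx => (hf x hx).continuousAt.continuousWithinAt)
    (fun x hx => (hf x (interior_subset hx)).hasDerivWithinAt)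
    (fun x hx => hf' x (interior_subset hx))

section Comparison

variable {ζ ζ' : ℝ → ℝ} {D : Set ℝ}

lemma monotoneOn_inv_sub_inv (hD : Convex ℝ D) (hD₀ : D ⊆ Ioi 0)
    (hζ : ∀ t ∈ D, HasDerivAt ζ (ζ' t) t) (hpos : ∀ t ∈ D, 0 < ζ t)
    (hζ' : ∀ t ∈ D, (t / ζ t) ^ 2 * ζ' t ≤ 1) :
    MonotoneOn (fun t => (ζ t)⁻¹ - t⁻¹) D := by
  refine hD.monotoneOn_of_hasDerivAt_nonneg (fun t ht => ?_) (fun t ht => ?_)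
    (f' := fun t => (1 - (t / ζ t) ^ 2 * ζ' t) / t ^ 2)
  · have ht0 : t ≠ 0 := (hD₀ ht).ne'
    have hζ0 : ζ t ≠ 0 := (hpos t ht).ne'
    refine (((hζ t ht).inv hζ0).sub (hasDerivAt_inv ht0)).congr_deriv ?_
    field_simp
    ring
  · exact div_nonneg (sub_nonneg.mpr (hζ' t ht)) (sq_nonneg t)

lemma monotoneOn_div_sq_sub_inv (hD : Convex ℝ D) (hD₀ : D ⊆ Ioi 0)
    (hζ : ∀ t ∈ D, HasDerivAt ζ (ζ' t) t) (hpos : ∀ t ∈ D, 0 < ζ t)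
    (hζ' : ∀ t ∈ D, 2 ≤ t / ζ t * (1 + ζ' t)) :
    MonotoneOn (fun t => ζ t / t ^ 2 - t⁻¹) D := by
  refine hD.monotoneOn_of_hasDerivAt_nonneg (fun t ht => ?_) (fun t ht => ?_)
    (f' := fun t => ζ t * (t / ζ t * (1 + ζ' t) - 2) / t ^ 3)
  · have ht0 : t ≠ 0 := (hD₀ ht).ne'
    have hζ0 : ζ t ≠ 0 := (hpos t ht).ne'
    have hsq : HasDerivAt (fun t : ℝ => t ^ 2) (2 * t) t := by simpa using hasDerivAt_pow 2 t
    refine (((hζ t ht).div hsq (pow_ne_zero 2 ht0)).sub (hasDerivAt_inv ht0)).congr_deriv ?_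
    field_simp
    ring
  · exact div_nonneg (mul_nonneg (hpos t ht).le (sub_nonneg.mpr (hζ' t ht)))
      (pow_nonneg (le_of_lt (hD₀ ht)) 3)

end Comparison

lemma div_one_add_mul_le_of_inv_sub_inv_le {x z c : ℝ} (hx : 0 < x) (hz : 0 < z)
    (h : z⁻¹ - x⁻¹ ≤ c) : x / (1 + x * c) ≤ z := by
  have hden : 1 + x * (z⁻¹ - x⁻¹) = x / z := by
    field_simp
    ring
  calc x / (1 + x * c) ≤ x / (x / z) :=
        div_le_div_of_nonneg_left hx.le (by positivity) (by rw [← hden]; gcongr)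
    _ = z := by field_simp

lemma le_mul_one_sub_of_div_sq_sub_inv_le {x z a b : ℝ} (hx : 0 < x)
    (h : z / x ^ 2 - x⁻¹ ≤ b / a ^ 2 - a⁻¹) : z ≤ x * (1 - (x / a) * (1 - b / a)) := by
  have hz : z = x ^ 2 * (z / x ^ 2 - x⁻¹) + x := by
    field_simp
    ring
  calc z = x ^ 2 * (z / x ^ 2 - x⁻¹) + x := hz
    _ ≤ x ^ 2 * (b / a ^ 2 - a⁻¹) + x := by gcongr
    _ = x * (1 - (x / a) * (1 - b / a)) := by ring

theorem completion_curve_bounds_general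
    (x₀ y₀ : ℝ)
    (xi : ℝ → ℝ)
    (hxi : ∀ lam : ℝ, 0 < lam →
      0 < xi lam ∧ xi lam = (1 + lam) * (1 - Real.exp (-(xi lam))))
    (ζ : ℝ → ℝ)
    (hζ' : ∀ x ∈ Set.Ioc (0 : ℝ) x₀,
      HasDerivAt ζ (Real.exp (-(xi (x / ζ x - 1)))) x)
    (hζ₀ : ζ x₀ = y₀)
    (hdom : ∀ x ∈ Set.Ioc (0 : ℝ) x₀, 0 < ζ x ∧ ζ x < x) :
    ∀ x ∈ Set.Ioc (0 : ℝ) x₀,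
      x / (1 + x * (1 / y₀ - 1 / x₀)) ≤ ζ x ∧
      ζ x ≤ x * (1 - (x / x₀) * (1 - y₀ / x₀)) := by
  have hfixed : ∀ t ∈ Ioc (0 : ℝ) x₀,
      0 < xi (t / ζ t - 1) ∧ xi (t / ζ t - 1) = t / ζ t * (1 - exp (-xi (t / ζ t - 1))) := by
    intro t ht
    obtain ⟨hpos, hlt⟩ := hdom t ht
    simpa using hxi (t / ζ t - 1) (by rw [sub_pos, one_lt_div hpos]; exact hlt)
  have hD₀ : Ioc (0 : ℝ) x₀ ⊆ Ioi 0 := Ioc_subset_Ioi_self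
  have hlower := monotoneOn_inv_sub_inv (convex_Ioc 0 x₀) hD₀ hζ' (fun t ht => (hdom t ht).1)
    (fun t ht => sq_mul_exp_neg_le_one (hfixed t ht).1 (hfixed t ht).2)
  have hupper := monotoneOn_div_sq_sub_inv (convex_Ioc 0 x₀) hD₀ hζ' (fun t ht => (hdom t ht).1)
    (fun t ht => two_le_mul_one_add_exp_neg (hfixed t ht).1 (hfixed t ht).2)
  intro x hx
  have hx₀ : x₀ ∈ Ioc (0 : ℝ) x₀ := ⟨hx.1.trans_le hx.2, le_rfl⟩
  have hl := hlower hx hx₀ hx.2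
  have hu := hupper hx hx₀ hx.2
  simp only [hζ₀, one_div] at hl hu ⊢
  exact ⟨div_one_add_mul_le_of_inv_sub_inv_le hx.1 (hdom x hx).1 hl,
    le_mul_one_sub_of_div_sq_sub_inv_le hx.1 hu⟩

/-- Bounds on the limit completion curve: if `ζ` solves `y' = e^{-ξ(x/y - 1)}` on
`(0, x₀]` with `ζ(x₀) = y₀` and `0 < ζ(x) < x`, then
`x/(1 + x(1/y₀ - 1/x₀)) ≤ ζ(x) ≤ x(1 - (x/x₀)(1 - y₀/x₀))`. -/
theorem completion_curve_bounds
    (x₀ y₀ : ℝ) (hy₀ : 0 < y₀) (hx₀ : y₀ < x₀)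
    (xi : ℝ → ℝ)
    (hxi : ∀ lam : ℝ, 0 < lam →
      0 < xi lam ∧ xi lam = (1 + lam) * (1 - Real.exp (-(xi lam))))
    (ζ : ℝ → ℝ)
    (hζ' : ∀ x ∈ Set.Ioc (0 : ℝ) x₀,
      HasDerivAt ζ (Real.exp (-(xi (x / ζ x - 1)))) x)
    (hζ₀ : ζ x₀ = y₀)
    (hdom : ∀ x ∈ Set.Ioc (0 : ℝ) x₀, 0 < ζ x ∧ ζ x < x) :
    ∀ x ∈ Set.Ioc (0 : ℝ) x₀,
      x / (1 + x * (1 / y₀ - 1 / x₀)) ≤ ζ x ∧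
      ζ x ≤ x * (1 - (x / x₀) * (1 - y₀ / x₀)) :=
  completion_curve_bounds_general x₀ y₀ xi hxi ζ hζ' hζ₀ hdom
end
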